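/- Fixation on the backbone: if γ_k^{(x,n)}(j) ∈ C for some k ≥ 0 and j ≤ k, where C is the backbone of the oriented percolation cluster, then γ_m^{(x,n)}(j) = γ_k^{(x,n)}(j) for all m > k. -/

import Mathlib

/-- A space-time site of `ℤ^d × ℤ`. -/
abbrev Site (d : ℕ) := (Fin d → ℤ) × ℤ

/-- The neighbourhood `U(x,n) = {(y,n+1) : ‖x − y‖_∞ ≤ 1}` of a site in the next generation. -/
def nbhd {d : ℕ} (p : Site d) : Set (Site d) :=
  {q | q.2 = p.2 + 1 ∧ ∀ i, |p.1 i - q.1 i| ≤ 1}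

/-- There is a directed open path of length `k` starting at `p` (all `k+1` sites on it open). -/
def hasOpenPath {d : ℕ} (ω : Site d → Bool) (p : Site d) (k : ℕ) : Prop :=
  ∃ γ : ℕ → (Fin d → ℤ), γ 0 = p.1 ∧
    (∀ j < k, ∀ i, |γ (j + 1) i - γ j i| ≤ 1) ∧
    (∀ j ≤ k, ω (γ j, p.2 + (j : ℤ)) = true)

/-- `ellSucc ω p` is `ℓ(p) + 1`, where `ℓ(p)` is the length of the longest directed open
path starting at `p` (with `ℓ(p) = −1`, i.e. `ellSucc ω p = 0`, at closed sites, and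
`ℓ(p) = ∞` on the backbone).  Shifting by one lets us work in `ℕ∞` instead of `{−1} ∪ ℕ∞`. -/
noncomputable def ellSucc {d : ℕ} (ω : Site d → Bool) (p : Site d) : ℕ∞ :=
  sSup {t : ℕ∞ | ∃ k : ℕ, t = (k : ℕ∞) + 1 ∧ hasOpenPath ω p k}

/-- The backbone `C` of the oriented percolation cluster: sites where `ℓ = ∞`. -/
def backbone {d : ℕ} (ω : Site d → Bool) : Set (Site d) := {p | ellSucc ω p = ⊤}

/-- `maximizers ω (k+1) p` is the set `M_k(p)` of maximisers over `U(p)` of the truncated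
length `ℓ_k = ℓ ∧ k` (in the shifted encoding: of `min (ℓ + 1) (k + 1)`), and
`maximizers ω 0 p = M_{−1}(p) = U(p)`. -/
noncomputable def maximizers {d : ℕ} (ω : Site d → Bool) : ℕ → Site d → Set (Site d)
  | 0, p => nbhd p
  | k + 1, p =>
      {q ∈ nbhd p |
        min (ellSucc ω q) ((k : ℕ∞) + 1) =
          sSup ((fun r => min (ellSucc ω r) ((k : ℕ∞) + 1)) '' nbhd p)}

/-- `sel` is a valid local-selection rule for the random permutations encoded by the
rank function `rank`: `rank p` enumerates the neighbourhood `U(p)` injectively (this is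
the permutation `ω̃(p)`), and `sel k p` is the element of `maximizers ω k p`
(i.e. of `M_{k-1}(p)`, with `sel 0 p ∈ M_{−1}(p) = U(p)`) appearing first in this
permutation. -/
def IsSelection {d : ℕ} (ω : Site d → Bool) (rank : Site d → Site d → ℕ)
    (sel : ℕ → Site d → Site d) : Prop :=
  (∀ p : Site d, Set.InjOn (rank p) (nbhd p)) ∧
    ∀ (k : ℕ) (p : Site d),
      sel k p ∈ maximizers ω k p ∧ ∀ q ∈ maximizers ω k p, rank p (sel k p) ≤ rank p q

/-- The locally constructed path `γ_k^{(x,n)}` of length `k` started at `p = (x,n)`: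
`γ_k(0) = p` and `γ_k(j+1) = m_{k−j−2}(γ_k(j))`, where `m_i` is the first element of
`M_i` in the permutation (in the shifted indexing, `γ_k(j+1) = sel (k−j−1) (γ_k(j))`). -/
def gammaPath {d : ℕ} (sel : ℕ → Site d → Site d) (p : Site d) (k : ℕ) : ℕ → Site d
  | 0 => p
  | j + 1 => sel (k - j - 1) (gammaPath sel p k j)


/-!
Write `ℓ' = ℓ + 1` (`ellSucc`) and call a site `q` settled at level `i` if `ℓ' q = ⊤` or
`ℓ' q < i`: then the truncation `min ℓ' i` of its length carries no ambiguity. The maximiser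
sets `M_i` shrink as the level `i` grows, so if the point selected at level `i` is settled at
that level it is still a maximiser, hence still the first one in the permutation, at every
higher level. Settledness propagates backwards along `γ_k`: a site whose selected successor is
on the backbone is either closed (`ℓ' = 0`) or on the backbone itself, and a site whose selected
successor has `ℓ' < i` sees no neighbour longer than it, so its own `ℓ'` exceeds that by at most
one. Starting from `γ_k(j) ∈ C`, every step of `γ_k` up to `j` is settled, and `γ_m` follows
the same steps.
-/

section Percolation

variable {d : ℕ} (ω : Site d → Bool)

theorem ellSucc_eq_zero_of_closed {q : Site d} (hq : ω q = false) : ellSucc ω q = 0 := by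
  refine le_antisymm (sSup_le ?_) zero_le
  rintro t ⟨k, -, γ, hγ0, -, hopen⟩
  have := hopen 0 (Nat.zero_le _)
  simp_all

theorem hasOpenPath_cons {q r : Site d} (hq : ω q = true) (hr : r ∈ nbhd q) {n : ℕ}
    (h : hasOpenPath ω r n) : hasOpenPath ω q (n + 1) := by
  obtain ⟨γ, h0, hstep, hopen⟩ := h
  obtain ⟨ht, hd⟩ := hr
  refine ⟨fun j => match j with | 0 => q.1 | j + 1 => γ j, rfl, ?_, ?_⟩
  · rintro (_ | j) hj i
    · simpa [h0, abs_sub_comm] using hd i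
    · exact hstep j (by omega) i
  · rintro (_ | j) hj
    · simpa using hq
    · have hz : q.2 + ((j + 1 : ℕ) : ℤ) = r.2 + (j : ℤ) := by rw [ht]; push_cast; ring
      change ω (γ j, q.2 + ((j + 1 : ℕ) : ℤ)) = true
      rw [hz]
      exact hopen j (by omega)

theorem exists_mem_nbhd_hasOpenPath {q : Site d} {n : ℕ} (h : hasOpenPath ω q (n + 1)) :
    ∃ r ∈ nbhd q, hasOpenPath ω r n := by
  obtain ⟨γ, h0, hstep, hopen⟩ := h
  refine ⟨(γ 1, q.2 + 1), ⟨rfl, fun i => ?_⟩, fun j => γ (j + 1), rfl, ?_, ?_⟩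
  · simpa [← h0, abs_sub_comm] using hstep 0 (by omega) i
  · exact fun j hj i => hstep (j + 1) (by omega) i
  · intro j hj
    have hz : q.2 + 1 + (j : ℤ) = q.2 + ((j + 1 : ℕ) : ℤ) := by push_cast; ring
    simpa [hz] using hopen (j + 1) (by omega)

theorem ellSucc_eq_top_of_mem_nbhd {q r : Site d} (hq : ω q = true) (hr : r ∈ nbhd q)
    (htop : ellSucc ω r = ⊤) : ellSucc ω q = ⊤ := by
  refine sSup_eq_top.mpr fun b hb => ?_
  obtain ⟨_, ⟨n, rfl, hpath⟩, hba⟩ := sSup_eq_top.mp htop b hb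
  refine ⟨((n + 1 : ℕ) : ℕ∞) + 1, ⟨n + 1, rfl, hasOpenPath_cons ω hq hr hpath⟩, ?_⟩
  exact hba.trans_le (by push_cast; exact le_self_add)

theorem ellSucc_le_add_one_of_forall_mem_nbhd {q : Site d} {v : ℕ∞}
    (h : ∀ r ∈ nbhd q, ellSucc ω r ≤ v) : ellSucc ω q ≤ v + 1 := by
  refine sSup_le ?_
  rintro _ ⟨_ | n, rfl, hpath⟩
  · simp
  · obtain ⟨r, hr, hp⟩ := exists_mem_nbhd_hasOpenPath ω hpath
    have hn : (n : ℕ∞) + 1 ≤ ellSucc ω r := le_sSup ⟨n, rfl, hp⟩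
    push_cast
    exact add_le_add_left (hn.trans (h r hr)) 1

theorem mem_maximizers_iff {i : ℕ} {q r : Site d} :
    r ∈ maximizers ω i q ↔
      r ∈ nbhd q ∧ ∀ r' ∈ nbhd q, min (ellSucc ω r') i ≤ min (ellSucc ω r) i := by
  cases i with
  | zero => simp [maximizers]
  | succ b =>
    simp only [maximizers, Set.mem_ofPred_eq, Nat.cast_add, Nat.cast_one]
    refine and_congr_right fun hr => ⟨fun heq r' hr' => heq ▸ le_sSup ⟨r', hr', rfl⟩,
      fun hle => le_antisymm (le_sSup ⟨r, hr, rfl⟩) (sSup_le ?_)⟩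
    rintro _ ⟨r', hr', rfl⟩
    exact hle r' hr'

theorem maximizers_subset_nbhd (i : ℕ) (q : Site d) : maximizers ω i q ⊆ nbhd q :=
  fun _ hr => ((mem_maximizers_iff ω).mp hr).1

theorem maximizers_antitone {i i' : ℕ} (hii : i ≤ i') (q : Site d) :
    maximizers ω i' q ⊆ maximizers ω i q := by
  intro r hr
  obtain ⟨hr, hle⟩ := (mem_maximizers_iff ω).mp hr
  have hcap : ∀ x : ℕ∞, min x i = min (min x i') i := fun x => by
    rw [min_assoc, min_eq_right (by exact_mod_cast hii : (i : ℕ∞) ≤ i')]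
  refine (mem_maximizers_iff ω).mpr ⟨hr, fun r' hr' => ?_⟩
  rw [hcap, hcap (ellSucc ω r)]
  exact min_le_min_right _ (hle r' hr')

theorem mem_maximizers_of_le_ellSucc {i : ℕ} {q r : Site d} (hr : r ∈ nbhd q)
    (h : (i : ℕ∞) ≤ ellSucc ω r) : r ∈ maximizers ω i q :=
  (mem_maximizers_iff ω).mpr ⟨hr, fun _ _ => (min_eq_right h).symm ▸ min_le_right _ _⟩

theorem mem_maximizers_of_forall_le {i : ℕ} {q r : Site d} (hr : r ∈ nbhd q)
    (h : ∀ r' ∈ nbhd q, ellSucc ω r' ≤ ellSucc ω r) : r ∈ maximizers ω i q :=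
  (mem_maximizers_iff ω).mpr ⟨hr, fun r' hr' => min_le_min_right _ (h r' hr')⟩

theorem le_of_mem_maximizers_of_lt {i : ℕ} {q r : Site d} (hr : r ∈ maximizers ω i q)
    (hlt : ellSucc ω r < i) : ∀ r' ∈ nbhd q, ellSucc ω r' ≤ ellSucc ω r := by
  intro r' hr'
  have hle := ((mem_maximizers_iff ω).mp hr).2 r' hr'
  rw [min_eq_left hlt.le] at hle
  by_contra! h
  exact (lt_min h hlt).not_ge hle

variable {ω} {rank : Site d → Site d → ℕ} {sel : ℕ → Site d → Site d}

theorem sel_eq_of_mem_maximizers (hsel : IsSelection ω rank sel) {i i' : ℕ} (hii : i ≤ i')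
    {q : Site d} (h : sel i q ∈ maximizers ω i' q) : sel i' q = sel i q := by
  have hi' := (hsel.2 i' q).1
  refine hsel.1 q (maximizers_subset_nbhd ω i' q hi')
    (maximizers_subset_nbhd ω i q (hsel.2 i q).1) (le_antisymm ?_ ?_)
  · exact (hsel.2 i' q).2 _ h
  · exact (hsel.2 i q).2 _ (maximizers_antitone ω hii q hi')

theorem sel_eq_of_le_of_settled (hsel : IsSelection ω rank sel) {i i' : ℕ} (hii : i ≤ i')
    {q : Site d} (h : ellSucc ω (sel i q) = ⊤ ∨ ellSucc ω (sel i q) < i) :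
    sel i' q = sel i q := by
  have hmem := (hsel.2 i q).1
  have hnbhd := maximizers_subset_nbhd ω i q hmem
  refine sel_eq_of_mem_maximizers hsel hii ?_
  rcases h with htop | hlt
  · exact mem_maximizers_of_le_ellSucc ω hnbhd (htop ▸ le_top)
  · exact mem_maximizers_of_forall_le ω hnbhd (le_of_mem_maximizers_of_lt ω hmem hlt)

theorem settled_of_sel_settled (hsel : IsSelection ω rank sel) {i : ℕ} {q : Site d}
    (h : ellSucc ω (sel i q) = ⊤ ∨ ellSucc ω (sel i q) < i) :
    ellSucc ω q = ⊤ ∨ ellSucc ω q < (i : ℕ∞) + 1 := by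
  have hmem := (hsel.2 i q).1
  rcases h with htop | hlt
  · cases hq : ω q
    · exact Or.inr (by simp [ellSucc_eq_zero_of_closed ω hq])
    · exact Or.inl (ellSucc_eq_top_of_mem_nbhd ω hq (maximizers_subset_nbhd ω i q hmem) htop)
  · right
    calc ellSucc ω q ≤ ellSucc ω (sel i q) + 1 :=
          ellSucc_le_add_one_of_forall_mem_nbhd ω (le_of_mem_maximizers_of_lt ω hmem hlt)
      _ ≤ i := (ENat.add_one_le_iff hlt.ne_top).mpr hlt
      _ < (i : ℕ∞) + 1 := by exact_mod_cast Nat.lt_succ_self i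

theorem gammaPath_settled_of_mem_backbone (hsel : IsSelection ω rank sel) {p : Site d}
    {k j : ℕ} (hj : j ≤ k) (hC : gammaPath sel p k j ∈ backbone ω) {j' : ℕ} (hj' : j' ≤ j) :
    ellSucc ω (gammaPath sel p k j') = ⊤ ∨
      ellSucc ω (gammaPath sel p k j') < ((k - j' : ℕ) : ℕ∞) := by
  induction hj' using Nat.decreasingInduction with
  | self => exact Or.inl hC
  | of_succ j' hj' ih =>
    have hk : ((k - j' : ℕ) : ℕ∞) = ((k - j' - 1 : ℕ) : ℕ∞) + 1 := by
      exact_mod_cast (by omega : k - j' = k - j' - 1 + 1)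
    rw [hk]
    exact settled_of_sel_settled hsel (by simpa only [gammaPath, Nat.sub_sub] using ih)

theorem gammaPath_eq_of_settled (hsel : IsSelection ω rank sel) {p : Site d} {k m j : ℕ}
    (hkm : k ≤ m)
    (hset : ∀ j' < j, ellSucc ω (gammaPath sel p k (j' + 1)) = ⊤ ∨
      ellSucc ω (gammaPath sel p k (j' + 1)) < ((k - (j' + 1) : ℕ) : ℕ∞)) :
    gammaPath sel p m j = gammaPath sel p k j := by
  induction j with
  | zero => rfl
  | succ j ih =>
    rw [gammaPath, gammaPath, ih fun j' hj' => hset j' (by omega)]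
    refine sel_eq_of_le_of_settled hsel (by omega) ?_
    simpa only [gammaPath, Nat.sub_sub] using hset j (by omega)

end Percolation

/-- Fixation on the backbone: if `γ_k^{(x,n)}(j) ∈ C` for some `k ≥ 0` and `j ≤ k`, then
`γ_m^{(x,n)}(j) = γ_k^{(x,n)}(j)` for all `m > k`. -/
theorem gammaPath_fixation (d : ℕ) (ω : Site d → Bool) (rank : Site d → Site d → ℕ)
    (sel : ℕ → Site d → Site d) (hsel : IsSelection ω rank sel)
    (p : Site d) (k j : ℕ) (hj : j ≤ k)
    (hC : gammaPath sel p k j ∈ backbone ω) :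
    ∀ m, k < m → gammaPath sel p m j = gammaPath sel p k j :=
  fun _ hm => gammaPath_eq_of_settled hsel hm.le fun _ hj' =>
    gammaPath_settled_of_mem_backbone hsel hj hC hj'
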